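/- arXiv:2201.06623 — 3 statements merged into one kernel-verified Lean document; each statement's English description precedes it below -/
import Mathlib

section
/- If $(a_n)_{n\in\mathbb{N}}$ is a sequence of real numbers with $a_n \in [0,1]$ for all $n$, then $a_n^n - \exp(-n(1-a_n)) \to 0$ as $n \to \infty$. -/
/-!
Write `s = 1 - x` and `b = exp (-s) ≥ x`, so that `exp (-n s) = b ^ n`. Since `b - x ≤ s ^ 2`, the
mean value bound `b (b ^ n - x ^ n) ≤ n b ^ n (b - x)` gives
`0 ≤ b ^ n - x ^ n ≤ exp s · (n s) ^ 2 exp (-n s) / n`, and `t ^ 2 exp (-t)` is bounded on `t ≥ 0`.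
This is a bound `O(1/n)` uniform in `x ∈ [0, 1]`.
-/

open Filter Real

lemma mul_pow_sub_pow_le {x b : ℝ} (hx : 0 ≤ x) (hxb : x ≤ b) (n : ℕ) :
    b * (b ^ n - x ^ n) ≤ n * b ^ n * (b - x) := by
  induction n with
  | zero => simp
  | succ n ih =>
    have hb : 0 ≤ b := hx.trans hxb
    have hxn : x ^ n ≤ b ^ n := pow_le_pow_left₀ hx hxb n
    calc b * (b ^ (n + 1) - x ^ (n + 1))
        = b * (b * (b ^ n - x ^ n)) + b * x ^ n * (b - x) := by ring
      _ ≤ b * (n * b ^ n * (b - x)) + b * b ^ n * (b - x) := by gcongr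
      _ = (n + 1 : ℕ) * b ^ (n + 1) * (b - x) := by push_cast; ring

lemma sq_mul_exp_neg_le {t : ℝ} (ht : 0 ≤ t) : t ^ 2 * exp (-t) ≤ 4 * exp (-2) := by
  have h := mul_exp_neg_le_exp_neg_one (t / 2)
  have h0 : 0 ≤ t / 2 * exp (-(t / 2)) := by positivity
  calc t ^ 2 * exp (-t) = 4 * (t / 2 * exp (-(t / 2))) ^ 2 := by
        rw [mul_pow, ← exp_nat_mul]; ring_nf
    _ ≤ 4 * exp (-1) ^ 2 := by gcongr
    _ = 4 * exp (-2) := by rw [← exp_nat_mul]; norm_num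

lemma abs_pow_sub_exp_neg_mul_le {x : ℝ} (hx : x ∈ Set.Icc (0 : ℝ) 1) (n : ℕ) :
    |x ^ n - exp (-(n : ℝ) * (1 - x))| ≤ 4 * exp (-1) / n := by
  obtain ⟨hx0, hx1⟩ := hx
  set s := 1 - x
  set b := exp (-s)
  have hxb : x ≤ b := by linarith [add_one_le_exp (-s)]
  have hbx : b - x ≤ s ^ 2 := by
    have := abs_exp_sub_one_sub_id_le (x := -s) (by rw [abs_neg, abs_le]; constructor <;> linarith)
    rw [neg_sq] at this
    linarith [(abs_le.mp this).2]
  have hpow : exp (-(n : ℝ) * s) = b ^ n := by rw [← exp_nat_mul]; ring_nf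
  rw [hpow, abs_sub_comm, abs_of_nonneg (by linarith [pow_le_pow_left₀ hx0 hxb n])]
  rcases n.eq_zero_or_pos with rfl | hn
  · simp
  have hn' : (0 : ℝ) < n := by exact_mod_cast hn
  have hb : 0 < b := exp_pos _
  calc b ^ n - x ^ n = b⁻¹ * (b * (b ^ n - x ^ n)) := by field_simp
    _ ≤ b⁻¹ * (n * b ^ n * s ^ 2) := by
        gcongr ?_ * ?_
        exact (mul_pow_sub_pow_le hx0 hxb n).trans (by gcongr)
    _ = exp s * ((n * s) ^ 2 * exp (-(n * s))) / n := by
        rw [← hpow, ← exp_neg, neg_neg]; field_simp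
    _ ≤ exp 1 * (4 * exp (-2)) / n := by
        gcongr ?_ * ?_ / _
        · exact exp_le_exp.mpr (by linarith)
        · exact sq_mul_exp_neg_le (by positivity)
    _ = 4 * exp (-1) / n := by rw [mul_left_comm, ← exp_add]; norm_num

theorem stmt0 (a : ℕ → ℝ) (ha : ∀ n, a n ∈ Set.Icc (0 : ℝ) 1) :
    Tendsto (fun n : ℕ => (a n) ^ n - Real.exp (-(n : ℝ) * (1 - a n))) atTop (nhds 0) :=
  squeeze_zero_norm (fun n => abs_pow_sub_exp_neg_mul_le (ha n) n)
    (tendsto_const_div_atTop_nhds_zero_nat _)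
end

section
/- Let $B \subseteq \mathbb{Z}^d$ be a finite nonempty set, let $\prec$ be a translation invariant strict total order on $\mathbb{Z}^d$, and let $b_1$ be the $\prec$-minimum of $B$. Let $m \in \mathbb{N}$ be large enough that $b_j - b_i \in A_0^{(m)}$ for all $i < j$, where $A_0^{(m)} = \{z \in [-m,m]^d \cap \mathbb{Z}^d : 0 \prec z\}$ and $B = \{b_1 \prec b_2 \prec \cdots \prec b_{|B|}\}$. Then $(A_0^{(m)} \cup \{0\}) \oplus B = (A_0^{(m)} \oplus B) \cup \{b_1\}$ and $b_1 \notin A_0^{(m)} \oplus B$. -/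
/-! Translating a positive difference `b - b₁ ∈ A₀` back by `b₁` shows that every `b ∈ B` other
than `b₁` already lies in `A₀ ⊕ B`, so adding `0` to `A₀` only contributes `b₁`. Conversely
`a + b = b₁` with `0 ≺ a` would give `b ≺ b₁` by translation invariance, against the minimality
of `b₁`. -/

open scoped Pointwise

section

variable {G : Type*}

theorem union_zero_add_eq_add_union_singleton [AddGroup G] {A B : Set G} {b₁ : G} (hb₁ : b₁ ∈ B)
    (hsub : ∀ b ∈ B, b ≠ b₁ → b - b₁ ∈ A) : (A ∪ {0}) + B = (A + B) ∪ {b₁} := by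
  simp only [Set.union_add, Set.singleton_add, zero_add, Set.image_id']
  apply subset_antisymm
  · refine Set.union_subset Set.subset_union_left fun b hb => ?_
    rcases eq_or_ne b b₁ with rfl | hne
    · exact Or.inr rfl
    · exact Or.inl ⟨b - b₁, hsub b hb hne, b₁, hb₁, sub_add_cancel b b₁⟩
  · rintro x (hx | rfl)
    · exact Or.inl hx
    · exact Or.inr hb₁

theorem notMem_add_of_forall_pos [AddZeroClass G] (r : G → G → Prop) [Std.Asymm r]
    (hinv : ∀ u v w : G, r u v ↔ r (u + w) (v + w)) {A B : Set G} (hA : ∀ a ∈ A, r 0 a)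
    {b₁ : G} (hmin : ∀ b ∈ B, b ≠ b₁ → r b₁ b) : b₁ ∉ A + B := by
  rintro ⟨a, ha, b, hb, rfl⟩
  have hlt : r b (a + b) := by simpa only [zero_add] using (hinv 0 a b).mp (hA a ha)
  rcases eq_or_ne b (a + b) with heq | hne
  · rw [← heq] at hlt
    exact asymm_of r hlt hlt
  · exact asymm_of r (hmin b hb hne) hlt

end

theorem stmt5_general {d m : ℕ}
    (r : (Fin d → ℤ) → (Fin d → ℤ) → Prop) [IsStrictTotalOrder (Fin d → ℤ) r]
    (hinv : ∀ u v w : Fin d → ℤ, r u v ↔ r (u + w) (v + w))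
    (B : Finset (Fin d → ℤ))
    (b1 : Fin d → ℤ) (hb1 : b1 ∈ B)
    (hmin : ∀ b ∈ B, b ≠ b1 → r b1 b)
    (A0 : Set (Fin d → ℤ))
    (hA0 : A0 = {z | (∀ i, |z i| ≤ (m : ℤ)) ∧ r 0 z})
    (hm : ∀ x ∈ B, ∀ y ∈ B, r x y → y - x ∈ A0) :
    (A0 ∪ {0}) + (B : Set (Fin d → ℤ)) = (A0 + (B : Set (Fin d → ℤ))) ∪ {b1}
      ∧ b1 ∉ A0 + (B : Set (Fin d → ℤ)) := by
  have hpos : ∀ a ∈ A0, r 0 a := fun a ha => (hA0 ▸ ha).2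
  exact ⟨union_zero_add_eq_add_union_singleton (Finset.mem_coe.2 hb1)
      fun b hb hne => hm b1 hb1 b hb (hmin b hb hne),
    notMem_add_of_forall_pos r hinv hpos hmin⟩

theorem stmt5 {d m : ℕ}
    (r : (Fin d → ℤ) → (Fin d → ℤ) → Prop) [IsStrictTotalOrder (Fin d → ℤ) r]
    (hinv : ∀ u v w : Fin d → ℤ, r u v ↔ r (u + w) (v + w))
    (B : Finset (Fin d → ℤ)) (hB : B.Nonempty)
    (b1 : Fin d → ℤ) (hb1 : b1 ∈ B)
    (hmin : ∀ b ∈ B, b ≠ b1 → r b1 b)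
    (A0 : Set (Fin d → ℤ))
    (hA0 : A0 = {z | (∀ i, |z i| ≤ (m : ℤ)) ∧ r 0 z})
    (hm : ∀ x ∈ B, ∀ y ∈ B, r x y → y - x ∈ A0) :
    (A0 ∪ {0}) + (B : Set (Fin d → ℤ)) = (A0 + (B : Set (Fin d → ℤ))) ∪ {b1}
      ∧ b1 ∉ A0 + (B : Set (Fin d → ℤ)) :=
  stmt5_general r hinv B b1 hb1 hmin A0 hA0 hm
end

section
/- Let $(\xi_v)_{v\in\mathbb{Z}^d}$ be a stationary random field, let $\prec$ be a translation invariant strict total order on $\mathbb{Z}^d$, let $H$ be a finite subset of $\mathbb{Z}^d$, and let $A_v = \{z \in v + T : v \prec z\}$ for a fixed finite set $T \subseteq \mathbb{Z}^d$ containing $H - H$. Then $\mathbb{P}(\max_{v\in H}\xi_v > x) \ge |H|\,\mathbb{P}(\max_{z \in A_0}\xi_z \le x < \xi_0)$ for every $x \in \mathbb{R}$, where $A_0 = \{z \in T : 0 \prec z\}$. -/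
/-!
Call `v` a last exceedance if `ξ v > x` while `ξ z ≤ x` at every `z ∈ v + T` above `v`.
Two distinct points `v ≺ w` of `H` cannot both be last exceedances, since `w ∈ v + T`
(as `T ⊇ H - H`) and `v ≺ w`. So these events are disjoint for `v ∈ H`, each lies in
`{max_H ξ > x}`, and by stationarity each has the probability of the event at `0`.
-/

open MeasureTheory ProbabilityTheory

section LastExceedance

variable {G : Type*}

def lastExceedanceSet [Zero G] (r : G → G → Prop) (T : Finset G) (x : ℝ) : Set (G → ℝ) :=
  {f | (∀ t ∈ T, r 0 t → f t ≤ x) ∧ x < f 0}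

theorem measurableSet_lastExceedanceSet [Zero G] (r : G → G → Prop) (T : Finset G) (x : ℝ) :
    MeasurableSet (lastExceedanceSet r T x) := by
  have hT : MeasurableSet {f : G → ℝ | ∀ t ∈ T, r 0 t → f t ≤ x} := by
    simp only [Set.ofPred_forall]
    exact .biInter T.countable_toSet fun t _ ↦ .iInter fun _ ↦
      measurableSet_le (measurable_pi_apply t) measurable_const
  exact hT.inter (measurableSet_lt measurable_const (measurable_pi_apply 0))

theorem disjoint_preimage_shift_lastExceedanceSet [AddGroup G] {r : G → G → Prop}
    (hinv : ∀ u v w : G, r u v → r (u + w) (v + w)) {T : Finset G} (x : ℝ) {v w : G}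
    (hvw : r v w) (hwv : w - v ∈ T) :
    Disjoint ((fun (f : G → ℝ) u ↦ f (u + v)) ⁻¹' lastExceedanceSet r T x)
      ((fun (f : G → ℝ) u ↦ f (u + w)) ⁻¹' lastExceedanceSet r T x) := by
  refine Set.disjoint_left.2 fun f hv hw ↦ ?_
  have hr : r 0 (w - v) := by simpa [sub_eq_add_neg] using hinv v w (-v) hvw
  have hle : f w ≤ x := by simpa using hv.1 (w - v) hwv hr
  exact hle.not_gt (by simpa using hw.2)

theorem pairwiseDisjoint_preimage_shift_lastExceedanceSet [AddGroup G] {r : G → G → Prop}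
    [Std.Trichotomous r] (hinv : ∀ u v w : G, r u v → r (u + w) (v + w)) {H T : Finset G}
    (hT : ∀ u ∈ H, ∀ u' ∈ H, u - u' ∈ T) (x : ℝ) :
    (H : Set G).PairwiseDisjoint
      fun v ↦ (fun (f : G → ℝ) u ↦ f (u + v)) ⁻¹' lastExceedanceSet r T x := by
  intro v hv w hw hne
  rcases trichotomous_of r v w with h | h | h
  · exact disjoint_preimage_shift_lastExceedanceSet hinv x h (hT w hw v hv)
  · exact absurd h hne
  · exact (disjoint_preimage_shift_lastExceedanceSet hinv x h (hT v hv w hw)).symm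

end LastExceedance

theorem measure_preimage_shift_eq_of_map_shift_eq {G Ω : Type*} [Add G] [MeasurableSpace Ω]
    {μ : Measure Ω} {ξ : G → Ω → ℝ} (hmeas : ∀ v, Measurable (ξ v)) {w : G}
    (hstat : μ.map (fun ω v ↦ ξ (v + w) ω) = μ.map (fun ω v ↦ ξ v ω))
    {S : Set (G → ℝ)} (hS : MeasurableSet S) :
    μ ((fun ω v ↦ ξ (v + w) ω) ⁻¹' S) = μ ((fun ω v ↦ ξ v ω) ⁻¹' S) := by
  rw [← Measure.map_apply (measurable_pi_lambda _ fun v ↦ hmeas (v + w)) hS, hstat,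
    Measure.map_apply (measurable_pi_lambda _ hmeas) hS]

theorem card_mul_le_measure_of_pairwiseDisjoint {ι α : Type*} [MeasurableSpace α]
    {μ : Measure α} {H : Finset ι} {B : ι → Set α} {E : Set α} {p : ENNReal}
    (hdisj : (H : Set ι).PairwiseDisjoint B) (hmeas : ∀ v ∈ H, MeasurableSet (B v))
    (hp : ∀ v ∈ H, μ (B v) = p) (hsub : ∀ v ∈ H, B v ⊆ E) :
    H.card * p ≤ μ E :=
  calc (H.card : ENNReal) * p = ∑ v ∈ H, μ (B v) := by
        rw [Finset.sum_congr rfl hp, Finset.sum_const, nsmul_eq_mul]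
    _ = μ (⋃ v ∈ H, B v) := (measure_biUnion_finset hdisj hmeas).symm
    _ ≤ μ E := measure_mono (Set.iUnion₂_subset hsub)

theorem stmt8_general {d : ℕ} {Ω : Type*} [MeasureSpace Ω]
    (ξ : (Fin d → ℤ) → Ω → ℝ)
    (hmeas : ∀ v, Measurable (ξ v))
    (hstat : ∀ w : Fin d → ℤ,
      Measure.map (fun ω (v : Fin d → ℤ) => ξ (v + w) ω) ℙ
        = Measure.map (fun ω (v : Fin d → ℤ) => ξ v ω) ℙ)
    (r : (Fin d → ℤ) → (Fin d → ℤ) → Prop) [IsStrictTotalOrder (Fin d → ℤ) r]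
    (hinv : ∀ u v w : Fin d → ℤ, r u v ↔ r (u + w) (v + w))
    (H T : Finset (Fin d → ℤ))
    (hT : ∀ u ∈ H, ∀ u' ∈ H, u - u' ∈ T)
    (x : ℝ) :
    (H.card : ENNReal) * ℙ {ω | (∀ z ∈ T, r 0 z → ξ z ω ≤ x) ∧ x < ξ 0 ω}
      ≤ ℙ {ω | ∃ v ∈ H, x < ξ v ω} := by
  have hS := measurableSet_lastExceedanceSet r T x
  refine card_mul_le_measure_of_pairwiseDisjoint (B := fun w ↦ (fun ω v ↦ ξ (v + w) ω) ⁻¹'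
    lastExceedanceSet r T x) (fun v hv w hw hne ↦ ?_) (fun w _ ↦ ?_) (fun w _ ↦ ?_) ?_
  · exact (pairwiseDisjoint_preimage_shift_lastExceedanceSet (fun u v w ↦ (hinv u v w).1) hT x
      hv hw hne).preimage fun ω v ↦ ξ v ω
  · exact (measurable_pi_lambda _ fun v ↦ hmeas (v + w)) hS
  · exact measure_preimage_shift_eq_of_map_shift_eq hmeas (hstat w) hS
  · rintro w hw ω ⟨-, hω⟩
    exact ⟨w, hw, by simpa using hω⟩

theorem stmt8 {d : ℕ} {Ω : Type*} [MeasureSpace Ω] [IsProbabilityMeasure (ℙ : Measure Ω)]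
    (ξ : (Fin d → ℤ) → Ω → ℝ)
    (hmeas : ∀ v, Measurable (ξ v))
    (hstat : ∀ w : Fin d → ℤ,
      Measure.map (fun ω (v : Fin d → ℤ) => ξ (v + w) ω) ℙ
        = Measure.map (fun ω (v : Fin d → ℤ) => ξ v ω) ℙ)
    (r : (Fin d → ℤ) → (Fin d → ℤ) → Prop) [IsStrictTotalOrder (Fin d → ℤ) r]
    (hinv : ∀ u v w : Fin d → ℤ, r u v ↔ r (u + w) (v + w))
    (H T : Finset (Fin d → ℤ))
    (hT : ∀ u ∈ H, ∀ u' ∈ H, u - u' ∈ T)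
    (x : ℝ) :
    (H.card : ENNReal) * ℙ {ω | (∀ z ∈ T, r 0 z → ξ z ω ≤ x) ∧ x < ξ 0 ω}
      ≤ ℙ {ω | ∃ v ∈ H, x < ξ v ω} :=
  stmt8_general ξ hmeas hstat r hinv H T hT x
end
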